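/- arXiv:1108.1522 — 5 statements merged into one kernel-verified Lean document; each statement's English description precedes it below -/
import Mathlib

section
/- Let H be an invertible N×N complex matrix, P an N×N permutation matrix, γ ≥ 0 a real number, a ∈ ℂᴺ, and A = diag(a₁,…,a_N). Define Q = I + γ² P H⁻¹ H⁻ᴴ Pᵀ and the matrix S with entries s_{ij} = Q_{ji} · [(H*)⁻¹ H⁻ᵀ]_{ij}. Then for the precoder G = H⁻ᵀ A P H⁻¹, the relay transmit power satisfies Tr[G H Hᴴ Gᴴ + γ² G Gᴴ] = Tr[A Q Aᴴ (H*)⁻¹ H⁻ᵀ] = aᴴ S a = Σ_{i,j} conj(a_i) s_{ij} a_j. -/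
/-!
With `G = H⁻ᵀ A P H⁻¹`, both terms of the power are congruences by `H⁻ᵀ`: the channel cancels and
`P` is unitary, so `G H Hᴴ Gᴴ = H⁻ᵀ A Aᴴ H⁻ᵀᴴ`, while `G Gᴴ = H⁻ᵀ A (P H⁻¹ H⁻ᴴ Pᴴ) Aᴴ H⁻ᵀᴴ`, so
the power is `Tr[H⁻ᵀ (A Q Aᴴ) H⁻ᵀᴴ]` with `H⁻ᵀᴴ = (H*)⁻¹`. Cycling the trace and using that `A` is
diagonal turns `Tr[diag(a) Q diag(a)ᴴ K]` into the quadratic form of the Hadamard product `Qᵀ ⊙ K`.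
-/

open Matrix

variable {n R : Type*} [Fintype n] [DecidableEq n]

section CommRing

variable [CommRing R] [StarRing R]

lemma permMatrix_mul_conjTranspose_permMatrix (σ : Equiv.Perm n) :
    σ.permMatrix R * (σ.permMatrix R)ᴴ = 1 := by
  rw [conjTranspose_permMatrix, ← permMatrix_mul, inv_mul_cancel, permMatrix_one]

omit [Fintype n] in
lemma conjTranspose_permMatrix_eq_transpose (σ : Equiv.Perm n) :
    (σ.permMatrix R)ᴴ = (σ.permMatrix R)ᵀ := by
  rw [conjTranspose_permMatrix, transpose_permMatrix]

lemma conjTranspose_inv_transpose (H : Matrix n n R) :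
    (Hᵀ)⁻¹ᴴ = (H.map (starRingEnd R))⁻¹ := by
  rw [conjTranspose_nonsing_inv]
  rfl

lemma precoder_power_eq_congr {H P A G : Matrix n n R} (hH : IsUnit H.det) (hP : P * Pᴴ = 1)
    (hG : G = (Hᵀ)⁻¹ * A * P * H⁻¹) (c : R) :
    G * H * Hᴴ * Gᴴ + c • (G * Gᴴ)
      = (Hᵀ)⁻¹ * (A * (1 + c • (P * H⁻¹ * (Hᴴ)⁻¹ * Pᴴ)) * Aᴴ) * (Hᵀ)⁻¹ᴴ := by
  have hH' : IsUnit Hᴴ.det := by rwa [det_conjTranspose, isUnit_star]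
  have hG_adj : Gᴴ = (Hᴴ)⁻¹ * Pᴴ * Aᴴ * (Hᵀ)⁻¹ᴴ := by
    simp only [hG, conjTranspose_mul, conjTranspose_nonsing_inv, Matrix.mul_assoc]
  have hGH : G * H * Hᴴ * Gᴴ = (Hᵀ)⁻¹ * A * Aᴴ * (Hᵀ)⁻¹ᴴ := by
    rw [hG_adj, hG, nonsing_inv_mul_cancel_right _ _ hH]
    simp only [Matrix.mul_assoc, mul_nonsing_inv_cancel_left _ _ hH']
    rw [← Matrix.mul_assoc P, hP, Matrix.one_mul]
  rw [hGH, hG_adj, hG]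
  simp only [Matrix.mul_add, Matrix.add_mul, Matrix.mul_one, Matrix.mul_smul, Matrix.smul_mul,
    Matrix.mul_assoc]

end CommRing

lemma trace_diagonal_mul_mul_conjTranspose_diagonal_mul [CommSemiring R] [StarRing R]
    (a : n → R) (Q K : Matrix n n R) :
    (diagonal a * Q * (diagonal a)ᴴ * K).trace = star a ⬝ᵥ (Qᵀ ⊙ K) *ᵥ a := by
  rw [dotProduct_mulVec, dotProduct_vecMul_hadamard, diagonal_conjTranspose, ← trace_transpose]
  simp only [transpose_mul, diagonal_transpose, Matrix.mul_assoc]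
  rw [trace_mul_comm]
  simp only [Matrix.mul_assoc]

omit [DecidableEq n] in
lemma star_dotProduct_mulVec_eq_sum [NonUnitalSemiring R] [Star R] (v w : n → R)
    (M : Matrix n n R) :
    star v ⬝ᵥ M *ᵥ w = ∑ i, ∑ j, star (v i) * M i j * w j := by
  simp only [dotProduct, mulVec, Pi.star_apply, Finset.mul_sum, mul_assoc]

theorem relay_power_eq_quadratic_form_general
    (N : ℕ)
    (H : Matrix (Fin N) (Fin N) ℂ) (hH : IsUnit H.det)
    (π : Equiv.Perm (Fin N)) (P : Matrix (Fin N) (Fin N) ℂ) (hP : P = π.permMatrix ℂ)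
    (γ : ℝ)
    (a : Fin N → ℂ)
    (A : Matrix (Fin N) (Fin N) ℂ) (hA : A = Matrix.diagonal a)
    (Q : Matrix (Fin N) (Fin N) ℂ)
    (hQ : Q = 1 + ((γ : ℂ)^2) • (P * H⁻¹ * (Hᴴ)⁻¹ * Pᵀ))
    (S : Matrix (Fin N) (Fin N) ℂ)
    (hS : ∀ i j, S i j = Q j i * (((H.map (starRingEnd ℂ))⁻¹ * (Hᵀ)⁻¹) i j))
    (G : Matrix (Fin N) (Fin N) ℂ) (hG : G = (Hᵀ)⁻¹ * A * P * H⁻¹) :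
    (G * H * Hᴴ * Gᴴ + ((γ : ℂ)^2) • (G * Gᴴ)).trace
        = (A * Q * Aᴴ * (H.map (starRingEnd ℂ))⁻¹ * (Hᵀ)⁻¹).trace ∧
    (A * Q * Aᴴ * (H.map (starRingEnd ℂ))⁻¹ * (Hᵀ)⁻¹).trace = star a ⬝ᵥ S *ᵥ a ∧
    star a ⬝ᵥ S *ᵥ a = ∑ i, ∑ j, (starRingEnd ℂ) (a i) * S i j * a j := by
  have hP_unitary : P * Pᴴ = 1 := hP ▸ permMatrix_mul_conjTranspose_permMatrix π
  have hQ' : Q = 1 + ((γ : ℂ)^2) • (P * H⁻¹ * (Hᴴ)⁻¹ * Pᴴ) := by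
    rw [hQ, hP, conjTranspose_permMatrix_eq_transpose]
  have hS' : S = Qᵀ ⊙ ((H.map (starRingEnd ℂ))⁻¹ * (Hᵀ)⁻¹) := Matrix.ext hS
  refine ⟨?_, ?_, star_dotProduct_mulVec_eq_sum a a S⟩
  · rw [precoder_power_eq_congr hH hP_unitary hG, ← hQ', Matrix.mul_assoc, trace_mul_comm,
      conjTranspose_inv_transpose]
  · rw [Matrix.mul_assoc (A * Q * Aᴴ), hA, trace_diagonal_mul_mul_conjTranspose_diagonal_mul, hS']

/-- relay transmit power of the zero-forcing precoder equals the quadratic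
form `aᴴ S a` where `s_{ij} = Q_{ji} [(H*)⁻¹ H⁻ᵀ]_{ij}` and
`Q = I + γ² P H⁻¹ H⁻ᴴ Pᵀ`. -/
theorem relay_power_eq_quadratic_form
    (N : ℕ) (hN : 1 ≤ N)
    (H : Matrix (Fin N) (Fin N) ℂ) (hH : IsUnit H.det)
    (π : Equiv.Perm (Fin N)) (P : Matrix (Fin N) (Fin N) ℂ) (hP : P = π.permMatrix ℂ)
    (γ : ℝ) (hγ : 0 ≤ γ)
    (a : Fin N → ℂ)
    (A : Matrix (Fin N) (Fin N) ℂ) (hA : A = Matrix.diagonal a)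
    (Q : Matrix (Fin N) (Fin N) ℂ)
    (hQ : Q = 1 + ((γ : ℂ)^2) • (P * H⁻¹ * (Hᴴ)⁻¹ * Pᵀ))
    (S : Matrix (Fin N) (Fin N) ℂ)
    (hS : ∀ i j, S i j = Q j i * (((H.map (starRingEnd ℂ))⁻¹ * (Hᵀ)⁻¹) i j))
    (G : Matrix (Fin N) (Fin N) ℂ) (hG : G = (Hᵀ)⁻¹ * A * P * H⁻¹) :
    (G * H * Hᴴ * Gᴴ + ((γ : ℂ)^2) • (G * Gᴴ)).trace
        = (A * Q * Aᴴ * (H.map (starRingEnd ℂ))⁻¹ * (Hᵀ)⁻¹).trace ∧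
    (A * Q * Aᴴ * (H.map (starRingEnd ℂ))⁻¹ * (Hᵀ)⁻¹).trace = star a ⬝ᵥ S *ᵥ a ∧
    star a ⬝ᵥ S *ᵥ a = ∑ i, ∑ j, (starRingEnd ℂ) (a i) * S i j * a j :=
  relay_power_eq_quadratic_form_general N H hH π P hP γ a A hA Q hQ S hS G hG
end

section
/- (Lemma 1) Consider the maxmin problem: minimize ε ≥ 0 over vectors a ∈ ℂᴺ with all entries nonzero, subject to q_i − 1 + σ²/|a_i|² ≤ ε for every i = 1,…,N and Re(aᴴ S a) ≤ p, where σ > 0 and p > 0. Then every optimal solution (a, ε) of this problem (i.e., a feasible point whose ε equals the minimum over all feasible points) satisfies the relay power constraint with equality: Re(aᴴ S a) = p. -/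
/-!
If the power constraint were slack at an optimum `(a, ε)`, scaling `a` by a real `t > 1` close
to `1` would keep it feasible and strictly lower every noise term `q_i - 1 + σ² / |t a_i|²`.
Their maximum is then a feasible level below `ε`; it is nonnegative because `q_i ≥ 1`, the
diagonal of `Q - I` being that of the Gram matrix `γ² (P H⁻¹)(P H⁻¹)ᴴ`.
-/

open Matrix Filter Topology
open scoped ComplexOrder

lemma Equiv.Perm.conjTranspose_permMatrix_eq_transpose {n R : Type*} [DecidableEq n]
    [NonAssocSemiring R] [StarRing R] (π : Equiv.Perm n) :
    (π.permMatrix R)ᴴ = (π.permMatrix R)ᵀ := by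
  rw [conjTranspose_permMatrix, transpose_permMatrix]

lemma Matrix.one_le_re_one_add_smul_mul_conjTranspose_apply {m n : Type*} [Finite m] [Fintype n]
    [DecidableEq m] (A : Matrix m n ℂ) (γ : ℝ) (i : m) :
    1 ≤ ((1 + ((γ : ℂ) ^ 2) • (A * Aᴴ) : Matrix m m ℂ) i i).re := by
  have hdiag : 0 ≤ (A * Aᴴ) i i := (posSemidef_self_mul_conjTranspose A).diag_nonneg
  have : 0 ≤ ((γ : ℂ) ^ 2 * (A * Aᴴ) i i).re := by
    rw [← Complex.ofReal_pow, Complex.re_ofReal_mul]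
    exact mul_nonneg (sq_nonneg γ) (Complex.nonneg_iff.mp hdiag).1
  simpa using this

lemma Matrix.re_dotProduct_mulVec_smul {n 𝕜 : Type*} [Fintype n] [RCLike 𝕜]
    (S : Matrix n n 𝕜) (a : n → 𝕜) (t : ℝ) :
    RCLike.re (star (t • a) ⬝ᵥ S *ᵥ (t • a)) = t ^ 2 * RCLike.re (star a ⬝ᵥ S *ᵥ a) := by
  rw [star_smul, star_trivial, mulVec_smul, dotProduct_smul, smul_dotProduct, smul_smul,
    RCLike.smul_re, sq]

lemma exists_one_lt_sq_mul_le {r p : ℝ} (h : r < p) : ∃ t : ℝ, 1 < t ∧ t ^ 2 * r ≤ p := by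
  have hcont : Tendsto (fun t : ℝ ↦ t ^ 2 * r) (𝓝[>] 1) (𝓝 r) :=
    ((by fun_prop : Continuous fun t : ℝ ↦ t ^ 2 * r).tendsto' 1 r (by simp)).mono_left
      nhdsWithin_le_nhds
  obtain ⟨t, htp, ht⟩ := ((hcont.eventually (gt_mem_nhds h)).and self_mem_nhdsWithin).exists
  exact ⟨t, ht, htp.le⟩

lemma div_norm_smul_sq_lt {E : Type*} [NormedAddCommGroup E] [NormedSpace ℝ E]
    {c t : ℝ} {z : E} (hc : 0 < c) (ht : 1 < t) (hz : z ≠ 0) :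
    c / ‖t • z‖ ^ 2 < c / ‖z‖ ^ 2 := by
  have hz' : 0 < ‖z‖ ^ 2 := by positivity
  rw [norm_smul, mul_pow, Real.norm_eq_abs, sq_abs]
  exact div_lt_div_of_pos_left hc hz' (lt_mul_left hz' (one_lt_pow₀ ht two_ne_zero))

theorem maxmin_optimal_power_constraint_tight_general
    (N : ℕ) (hN : 1 ≤ N)
    (H : Matrix (Fin N) (Fin N) ℂ)
    (π : Equiv.Perm (Fin N)) (P : Matrix (Fin N) (Fin N) ℂ) (hP : P = π.permMatrix ℂ)
    (γ σ p : ℝ) (hσ : 0 < σ)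
    (Q : Matrix (Fin N) (Fin N) ℂ)
    (hQ : Q = 1 + ((γ : ℂ)^2) • (P * H⁻¹ * (Hᴴ)⁻¹ * Pᵀ))
    (S : Matrix (Fin N) (Fin N) ℂ)
    (Feasible : (Fin N → ℂ) → ℝ → Prop)
    (hFeasible : ∀ a ε, Feasible a ε ↔
      (∀ i, a i ≠ 0) ∧ 0 ≤ ε ∧
      (∀ i, (Q i i).re - 1 + σ^2 / ‖a i‖^2 ≤ ε) ∧
      (star a ⬝ᵥ S *ᵥ a).re ≤ p)
    (a : Fin N → ℂ) (ε : ℝ)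
    (hfeas : Feasible a ε)
    (hopt : ∀ a' ε', Feasible a' ε' → ε ≤ ε') :
    (star a ⬝ᵥ S *ᵥ a).re = p := by
  obtain ⟨ha, -, hnoise, hpow⟩ := (hFeasible a ε).mp hfeas
  refine hpow.eq_of_not_lt fun hlt ↦ ?_
  have hQ_diag (i : Fin N) : 1 ≤ (Q i i).re := by
    have : P * H⁻¹ * (Hᴴ)⁻¹ * Pᵀ = P * H⁻¹ * (P * H⁻¹)ᴴ := by
      rw [conjTranspose_mul, conjTranspose_nonsing_inv, hP,
        π.conjTranspose_permMatrix_eq_transpose, Matrix.mul_assoc _ (Hᴴ)⁻¹]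
    rw [hQ, this]
    exact (P * H⁻¹).one_le_re_one_add_smul_mul_conjTranspose_apply γ i
  obtain ⟨t, ht, htp⟩ := exists_one_lt_sq_mul_le hlt
  have hta (i : Fin N) : (t • a) i ≠ 0 := smul_ne_zero (zero_lt_one.trans ht).ne' (ha i)
  let noise (i : Fin N) : ℝ := (Q i i).re - 1 + σ ^ 2 / ‖(t • a) i‖ ^ 2
  have hnoise_lt (i : Fin N) : noise i < ε :=
    (add_lt_add_right (div_norm_smul_sq_lt (pow_pos hσ 2) ht (ha i)) _).trans_le (hnoise i)
  have huniv : (Finset.univ : Finset (Fin N)).Nonempty := Finset.univ_nonempty_iff.mpr ⟨⟨0, hN⟩⟩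
  have hfeas' : Feasible (t • a) (Finset.univ.sup' huniv noise) := by
    refine (hFeasible _ _).mpr ⟨hta, ?_,
      fun i ↦ Finset.le_sup' noise (Finset.mem_univ i), ?_⟩
    · obtain ⟨i, hi⟩ := huniv
      exact (add_nonneg (sub_nonneg.mpr (hQ_diag i)) (by positivity)).trans
        (Finset.le_sup' noise hi)
    · rwa [← RCLike.re_to_complex, Matrix.re_dotProduct_mulVec_smul]
  exact (hopt _ _ hfeas').not_gt ((Finset.sup'_lt_iff huniv).mpr fun i _ ↦ hnoise_lt i)

/-- Lemma 1: every optimal solution of the maxmin problem satisfies the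
relay power constraint with equality `Re(aᴴ S a) = p`. -/
theorem maxmin_optimal_power_constraint_tight
    (N : ℕ) (hN : 1 ≤ N)
    (H : Matrix (Fin N) (Fin N) ℂ) (hH : IsUnit H.det)
    (π : Equiv.Perm (Fin N)) (P : Matrix (Fin N) (Fin N) ℂ) (hP : P = π.permMatrix ℂ)
    (γ σ p : ℝ) (hγ : 0 ≤ γ) (hσ : 0 < σ) (hp : 0 < p)
    (Q : Matrix (Fin N) (Fin N) ℂ)
    (hQ : Q = 1 + ((γ : ℂ)^2) • (P * H⁻¹ * (Hᴴ)⁻¹ * Pᵀ))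
    (S : Matrix (Fin N) (Fin N) ℂ)
    (hS : ∀ i j, S i j = Q j i * (((H.map (starRingEnd ℂ))⁻¹ * (Hᵀ)⁻¹) i j))
    (Feasible : (Fin N → ℂ) → ℝ → Prop)
    (hFeasible : ∀ a ε, Feasible a ε ↔
      (∀ i, a i ≠ 0) ∧ 0 ≤ ε ∧
      (∀ i, (Q i i).re - 1 + σ^2 / ‖a i‖^2 ≤ ε) ∧
      (star a ⬝ᵥ S *ᵥ a).re ≤ p)
    (a : Fin N → ℂ) (ε : ℝ)
    (hfeas : Feasible a ε)
    (hopt : ∀ a' ε', Feasible a' ε' → ε ≤ ε') :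
    (star a ⬝ᵥ S *ᵥ a).re = p :=
  maxmin_optimal_power_constraint_tight_general N hN H π P hP γ σ p hσ Q hQ S Feasible hFeasible a ε
    hfeas hopt
end

section
/- (Proposition 3) Suppose γ = 0, i.e., no additional noise is introduced at the relay, so that Q = I, q_i = 1 for all i, and S is a diagonal matrix with diagonal entries s_{ii} = [(H*)⁻¹ H⁻ᵀ]_{ii}, which are real and strictly positive. Then every optimal solution a of the maxmin problem (minimize ε over a with nonzero entries subject to σ²/|a_i|² ≤ ε for all i and Re(aᴴ S a) ≤ p) satisfies |a_i|² = σ²/ε̃ for every i, where ε̃ is the optimal value; i.e., at the optimum every station has exactly the same post-processing noise power, so the maxmin problem and the equal-SNR problem (which imposes σ²/|a_i|² = ε for all i) have the same optimal solutions and the same optimal value. -/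
/-!
With `γ = 0` we have `Q = 1` and `S = diagonal c` with `c i = ∑ k, ‖H⁻¹ i k‖²`, which is positive
because `H⁻¹` has no zero row; so the problem is to minimise `ε` subject to `σ²/‖a i‖² ≤ ε` and
`∑ c i ‖a i‖² ≤ p`. At an optimum every `‖a i‖²` is at least `σ²/ε`. If one of these inequalities
were strict, replacing every `a i` by one fixed vector of squared norm `σ²/ε` would stay feasible
while leaving part of the power budget unused, and scaling that vector up to the full budget would
give a feasible point with a smaller `ε`.
-/

open Matrix

section MaxminProblem

variable {ι E : Type*} [Fintype ι] [NormedAddCommGroup E]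

def weightedPower (c : ι → ℝ) (a : ι → E) : ℝ := ∑ i, c i * ‖a i‖ ^ 2

lemma weightedPower_smul [NormedSpace ℝ E] (c : ι → ℝ) (t : ℝ) (a : ι → E) :
    weightedPower c (t • a) = t ^ 2 * weightedPower c a := by
  simp only [weightedPower, Pi.smul_apply, norm_smul, Real.norm_eq_abs, mul_pow, sq_abs,
    Finset.mul_sum]
  exact Finset.sum_congr rfl fun i _ => by ring

lemma weightedPower_pos [Nonempty ι] {c : ι → ℝ} (hc : ∀ i, 0 < c i) {a : ι → E}
    (ha : ∀ i, a i ≠ 0) : 0 < weightedPower c a :=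
  Finset.sum_pos (fun i _ => mul_pos (hc i) (pow_pos (norm_pos_iff.2 (ha i)) 2))
    Finset.univ_nonempty

def MaxminFeasible (c : ι → ℝ) (σ p : ℝ) (a : ι → E) (ε : ℝ) : Prop :=
  (∀ i, a i ≠ 0) ∧ 0 ≤ ε ∧ (∀ i, σ ^ 2 / ‖a i‖ ^ 2 ≤ ε) ∧ weightedPower c a ≤ p

variable {c : ι → ℝ} {σ p ε : ℝ} {a : ι → E}

lemma MaxminFeasible.exists_lt_of_weightedPower_lt [NormedSpace ℝ E] [Nonempty ι]
    (hc : ∀ i, 0 < c i) (hf : MaxminFeasible c σ p a ε) (hε : 0 < ε) (hlt : weightedPower c a < p) :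
    ∃ (a' : ι → E) (ε' : ℝ), MaxminFeasible c σ p a' ε' ∧ ε' < ε := by
  obtain ⟨ha, -, hnoise, -⟩ := hf
  have hpos := weightedPower_pos hc ha
  have hratio : 1 < p / weightedPower c a := (one_lt_div hpos).2 hlt
  set t := √(p / weightedPower c a)
  have ht : 1 < t := by rwa [Real.lt_sqrt zero_le_one, one_pow]
  refine ⟨t • a, ε / t ^ 2, ⟨fun i => smul_ne_zero (zero_lt_one.trans ht).ne' (ha i),
    by positivity, fun i => ?_, ?_⟩, div_lt_self hε (one_lt_pow₀ ht two_ne_zero)⟩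
  · rw [Pi.smul_apply, norm_smul, mul_pow, Real.norm_eq_abs, sq_abs, div_mul_eq_div_div_swap]
    gcongr
    exact hnoise i
  · rw [weightedPower_smul, Real.sq_sqrt (zero_le_one.trans hratio.le), div_mul_cancel₀ _ hpos.ne']

theorem MaxminFeasible.norm_sq_eq_of_forall_le [NormedSpace ℝ E] (hc : ∀ i, 0 < c i)
    (hσ : 0 < σ) (hf : MaxminFeasible c σ p a ε)
    (hopt : ∀ (a' : ι → E) ε', MaxminFeasible c σ p a' ε' → ε ≤ ε')
    (i : ι) : ‖a i‖ ^ 2 = σ ^ 2 / ε := by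
  obtain ⟨ha, -, hnoise, hpow⟩ := hf
  have ha2 : ∀ j, 0 < ‖a j‖ ^ 2 := fun j => pow_pos (norm_pos_iff.2 (ha j)) 2
  have hε : 0 < ε := (div_pos (pow_pos hσ 2) (ha2 i)).trans_le (hnoise i)
  have hge : ∀ j, σ ^ 2 / ε ≤ ‖a j‖ ^ 2 := fun j => (div_le_comm₀ (ha2 j) hε).1 (hnoise j)
  refine ((hge i).lt_or_eq.resolve_left fun hlt => ?_).symm
  have : Nontrivial E := ⟨⟨a i, 0, ha i⟩⟩
  have : Nonempty ι := ⟨i⟩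
  obtain ⟨x, hx⟩ := exists_norm_eq E (by positivity : 0 ≤ σ / √ε)
  have hx2 : ‖x‖ ^ 2 = σ ^ 2 / ε := by rw [hx, div_pow, Real.sq_sqrt hε.le]
  have hx0 : x ≠ 0 := norm_pos_iff.1 (by rw [hx]; positivity)
  have hless : weightedPower c (fun _ => x) < weightedPower c a :=
    Finset.sum_lt_sum (fun j _ => mul_le_mul_of_nonneg_left (hx2.le.trans (hge j)) (hc j).le)
      ⟨i, Finset.mem_univ i, mul_lt_mul_of_pos_left (hx2.trans_lt hlt) (hc i)⟩
  have hslack : weightedPower c (fun _ => x) < p := hless.trans_le hpow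
  have hfx : MaxminFeasible c σ p (fun _ => x) ε :=
    ⟨fun _ => hx0, hε.le, fun _ => by rw [hx2, div_div_cancel₀ (by positivity)], hslack.le⟩
  obtain ⟨a', ε', hf', hlt'⟩ := hfx.exists_lt_of_weightedPower_lt hc hε hslack
  exact (hopt a' ε' hf').not_gt hlt'

end MaxminProblem

section Matrix

variable {n : Type*} [Fintype n] [DecidableEq n]

lemma sum_norm_sq_row_pos_of_isUnit_det {R : Type*} [NormedCommRing R] [Nontrivial R]
    {A : Matrix n n R} (hA : IsUnit A.det) (i : n) : 0 < ∑ k, ‖A i k‖ ^ 2 := by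
  refine (Finset.sum_nonneg fun k _ => sq_nonneg ‖A i k‖).lt_of_ne fun h => hA.ne_zero ?_
  refine det_eq_zero_of_row_eq_zero i fun k => ?_
  simpa using (Finset.sum_eq_zero_iff_of_nonneg fun k _ => sq_nonneg ‖A i k‖).1 h.symm k
    (Finset.mem_univ k)

variable {𝕜 : Type*} [RCLike 𝕜]

lemma map_conj_inv_mul_transpose_inv_apply_self (H : Matrix n n 𝕜) (i : n) :
    ((H.map (starRingEnd 𝕜))⁻¹ * Hᵀ⁻¹) i i = ((∑ k, ‖H⁻¹ i k‖ ^ 2 : ℝ) : 𝕜) := by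
  rw [show H.map (starRingEnd 𝕜) = Hᴴᵀ from rfl, ← transpose_nonsing_inv,
    ← conjTranspose_nonsing_inv, ← transpose_nonsing_inv, mul_apply]
  push_cast
  exact Finset.sum_congr rfl fun k _ => by simp [RCLike.conj_mul]

lemma re_star_dotProduct_diagonal_mulVec (d : n → ℝ) (v : n → 𝕜) :
    RCLike.re (star v ⬝ᵥ diagonal (fun i => (d i : 𝕜)) *ᵥ v) = ∑ i, d i * ‖v i‖ ^ 2 := by
  simp only [dotProduct, mulVec_diagonal, map_sum]
  refine Finset.sum_congr rfl fun i _ => ?_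
  rw [Pi.star_apply, mul_left_comm, RCLike.star_def, RCLike.conj_mul]
  norm_cast

end Matrix

theorem maxmin_eq_equalSNR_of_no_relay_noise_general
    (N : ℕ)
    (H : Matrix (Fin N) (Fin N) ℂ) (hH : IsUnit H.det)
    (P : Matrix (Fin N) (Fin N) ℂ)
    (γ σ p : ℝ) (hγ : γ = 0) (hσ : 0 < σ)
    (Q : Matrix (Fin N) (Fin N) ℂ)
    (hQ : Q = 1 + ((γ : ℂ)^2) • (P * H⁻¹ * (Hᴴ)⁻¹ * Pᵀ))
    (S : Matrix (Fin N) (Fin N) ℂ)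
    (hS : ∀ i j, S i j = Q j i * (((H.map (starRingEnd ℂ))⁻¹ * (Hᵀ)⁻¹) i j))
    -- the maxmin feasibility predicate
    (Feasible : (Fin N → ℂ) → ℝ → Prop)
    (hFeasible : ∀ a ε, Feasible a ε ↔
      (∀ i, a i ≠ 0) ∧ 0 ≤ ε ∧
      (∀ i, (Q i i).re - 1 + σ^2 / ‖a i‖^2 ≤ ε) ∧
      (star a ⬝ᵥ S *ᵥ a).re ≤ p)
    -- the equal-SNR feasibility predicate
    (EqFeasible : (Fin N → ℂ) → ℝ → Prop)
    (hEqFeasible : ∀ a ε, EqFeasible a ε ↔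
      (∀ i, a i ≠ 0) ∧ 0 ≤ ε ∧
      (∀ i, (Q i i).re - 1 + σ^2 / ‖a i‖^2 = ε) ∧
      (star a ⬝ᵥ S *ᵥ a).re ≤ p)
    -- (a, εopt) is an optimal solution of the maxmin problem
    (a : Fin N → ℂ) (εopt : ℝ)
    (hfeas : Feasible a εopt)
    (hopt : ∀ a' ε', Feasible a' ε' → εopt ≤ ε') :
    (∀ i, ‖a i‖^2 = σ^2 / εopt) ∧
    EqFeasible a εopt ∧
    (∀ a' ε', EqFeasible a' ε' → εopt ≤ ε') := by
  obtain rfl : Q = 1 := by rw [hQ, hγ]; simp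
  set c : Fin N → ℝ := fun i => ∑ k, ‖H⁻¹ i k‖ ^ 2
  have hS_diag : S = diagonal fun i => (c i : ℂ) := by
    ext i j
    rcases eq_or_ne i j with rfl | h
    · simp [hS, c, map_conj_inv_mul_transpose_inv_apply_self]
    · simp [hS, h, h.symm]
  have hpower : ∀ v : Fin N → ℂ, (star v ⬝ᵥ S *ᵥ v).re = weightedPower c v := fun v => by
    rw [hS_diag]; exact re_star_dotProduct_diagonal_mulVec c v
  have hFeasible_iff : ∀ a ε, Feasible a ε ↔ MaxminFeasible c σ p a ε := by
    intro a ε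
    simp [hFeasible, hpower, MaxminFeasible]
  have hEqFeasible_iff : ∀ a ε, EqFeasible a ε ↔ Feasible a ε ∧ ∀ i, σ ^ 2 / ‖a i‖ ^ 2 = ε := by
    intro a ε
    simp only [hEqFeasible, hFeasible, one_apply_eq, Complex.one_re, sub_self, zero_add]
    exact ⟨fun ⟨ha, hε, heq, hp⟩ => ⟨⟨ha, hε, fun i => (heq i).le, hp⟩, heq⟩,
      fun ⟨⟨ha, hε, _, hp⟩, heq⟩ => ⟨ha, hε, heq, hp⟩⟩
  have hequal : ∀ i, ‖a i‖ ^ 2 = σ ^ 2 / εopt :=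
    ((hFeasible_iff a εopt).1 hfeas).norm_sq_eq_of_forall_le
      (sum_norm_sq_row_pos_of_isUnit_det (isUnit_nonsing_inv_det H hH)) hσ
      fun a' ε' h => hopt a' ε' ((hFeasible_iff a' ε').2 h)
  refine ⟨hequal, (hEqFeasible_iff a εopt).2 ⟨hfeas, fun i => ?_⟩,
    fun a' ε' h => hopt a' ε' ((hEqFeasible_iff a' ε').1 h).1⟩
  rw [hequal i, div_div_cancel₀ (pow_pos hσ 2).ne']

/-- Proposition 3: when no noise is introduced at the relay (`γ = 0`, so
`Q = I` and `q_i = 1`), every optimal solution of the maxmin problem has identical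
post-processing noise power at every station, `|a_i|² = σ²/ε̃`; hence it is feasible for the
equal-SNR problem and the two problems have the same optimal value. -/
theorem maxmin_eq_equalSNR_of_no_relay_noise
    (N : ℕ) (hN : 1 ≤ N)
    (H : Matrix (Fin N) (Fin N) ℂ) (hH : IsUnit H.det)
    (π : Equiv.Perm (Fin N)) (P : Matrix (Fin N) (Fin N) ℂ) (hP : P = π.permMatrix ℂ)
    (γ σ p : ℝ) (hγ : γ = 0) (hσ : 0 < σ) (hp : 0 < p)
    (Q : Matrix (Fin N) (Fin N) ℂ)
    (hQ : Q = 1 + ((γ : ℂ)^2) • (P * H⁻¹ * (Hᴴ)⁻¹ * Pᵀ))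
    (S : Matrix (Fin N) (Fin N) ℂ)
    (hS : ∀ i j, S i j = Q j i * (((H.map (starRingEnd ℂ))⁻¹ * (Hᵀ)⁻¹) i j))
    -- the maxmin feasibility predicate
    (Feasible : (Fin N → ℂ) → ℝ → Prop)
    (hFeasible : ∀ a ε, Feasible a ε ↔
      (∀ i, a i ≠ 0) ∧ 0 ≤ ε ∧
      (∀ i, (Q i i).re - 1 + σ^2 / ‖a i‖^2 ≤ ε) ∧
      (star a ⬝ᵥ S *ᵥ a).re ≤ p)
    -- the equal-SNR feasibility predicate
    (EqFeasible : (Fin N → ℂ) → ℝ → Prop)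
    (hEqFeasible : ∀ a ε, EqFeasible a ε ↔
      (∀ i, a i ≠ 0) ∧ 0 ≤ ε ∧
      (∀ i, (Q i i).re - 1 + σ^2 / ‖a i‖^2 = ε) ∧
      (star a ⬝ᵥ S *ᵥ a).re ≤ p)
    -- (a, εopt) is an optimal solution of the maxmin problem
    (a : Fin N → ℂ) (εopt : ℝ)
    (hfeas : Feasible a εopt)
    (hopt : ∀ a' ε', Feasible a' ε' → εopt ≤ ε') :
    (∀ i, ‖a i‖^2 = σ^2 / εopt) ∧
    EqFeasible a εopt ∧
    (∀ a' ε', EqFeasible a' ε' → εopt ≤ ε') :=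
  maxmin_eq_equalSNR_of_no_relay_noise_general N H hH P γ σ p hγ hσ Q hQ S hS Feasible hFeasible
    EqFeasible hEqFeasible a εopt hfeas hopt
end

section
/- Let N = 2, let H be an invertible 2×2 complex matrix, γ ≥ 0 real, and let P be the 2×2 swap permutation matrix [[0,1],[1,0]]. Define Q = I + γ² P H⁻¹ H⁻ᴴ Pᵀ and S by s_{ij} = Q_{ji} · [(H*)⁻¹ H⁻ᵀ]_{ij}. Then the off-diagonal entries of S satisfy s₁₂ = s₂₁ = γ² |K₁₂|², where K = H⁻¹ H⁻ᴴ; in particular s₁₂ and s₂₁ are equal, real, and nonnegative. -/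
open Matrix ComplexOrder

/-!
Write `K = H⁻¹H⁻ᴴ`. Entrywise conjugating `Hᴴ` gives `Hᵀ`, so `(H*)⁻¹H⁻ᵀ = Kᵀ`, while conjugating
by the swap `P` exchanges the two off-diagonal entries of `K`. Hence `s₁₂ = γ² K₁₂ K₂₁` and
`s₂₁ = γ² K₂₁ K₁₂`, and since `K` is Hermitian, `K₂₁ = conj K₁₂`, so both equal `γ² |K₁₂|²`.
-/

namespace Matrix

variable {n α : Type*} [Fintype n] [DecidableEq n]

theorem map_star_inv_mul_transpose_inv [CommRing α] [StarRing α] (A : Matrix n n α) :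
    (A.map star)⁻¹ * Aᵀ⁻¹ = (A⁻¹ * Aᴴ⁻¹)ᵀ := by
  rw [← conjTranspose_transpose, ← transpose_nonsing_inv, ← transpose_nonsing_inv,
    transpose_mul]

theorem isHermitian_inv_mul_conjTranspose_inv [CommRing α] [StarRing α] (A : Matrix n n α) :
    (A⁻¹ * Aᴴ⁻¹).IsHermitian := by
  rw [← conjTranspose_nonsing_inv]
  exact isHermitian_mul_conjTranspose_self A⁻¹

end Matrix

theorem swap_mul_mul_transpose_swap {α : Type*} [Semiring α] (M : Matrix (Fin 2) (Fin 2) α) :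
    !![0, 1; 1, 0] * M * (!![0, 1; 1, 0] : Matrix (Fin 2) (Fin 2) α)ᵀ
      = !![M 1 1, M 1 0; M 0 1, M 0 0] := by
  ext i j
  fin_cases i <;> fin_cases j <;> simp [mul_apply, vecMul, dotProduct, Fin.sum_univ_two]

theorem two_station_S_offdiag_general
    (H : Matrix (Fin 2) (Fin 2) ℂ)
    (γ : ℝ)
    (P : Matrix (Fin 2) (Fin 2) ℂ) (hP : P = !![0, 1; 1, 0])
    (Q : Matrix (Fin 2) (Fin 2) ℂ)
    (hQ : Q = 1 + ((γ : ℂ)^2) • (P * H⁻¹ * (Hᴴ)⁻¹ * Pᵀ))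
    (S : Matrix (Fin 2) (Fin 2) ℂ)
    (hS : ∀ i j, S i j = Q j i * (((H.map (starRingEnd ℂ))⁻¹ * (Hᵀ)⁻¹) i j))
    (K : Matrix (Fin 2) (Fin 2) ℂ) (hK : K = H⁻¹ * (Hᴴ)⁻¹) :
    S 0 1 = S 1 0 ∧
    S 0 1 = ((γ : ℂ)^2) * ((‖K 0 1‖^2 : ℝ) : ℂ) ∧
    0 ≤ S 0 1 := by
  have hQK : Q = 1 + ((γ : ℂ)^2) • !![K 1 1, K 1 0; K 0 1, K 0 0] := by
    rw [hQ, hP, hK, ← swap_mul_mul_transpose_swap, Matrix.mul_assoc _ H⁻¹]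
  have hSK : ∀ i j, S i j = Q j i * K j i := fun i j => by
    rw [hS, hK]
    exact congrArg _ (congrFun (congrFun (map_star_inv_mul_transpose_inv H) i) j)
  have hK10 : K 1 0 = starRingEnd ℂ (K 0 1) :=
    ((hK ▸ isHermitian_inv_mul_conjTranspose_inv H).apply 1 0).symm
  have hS01 : S 0 1 = (γ : ℂ)^2 * (K 0 1 * starRingEnd ℂ (K 0 1)) := by
    simp [hSK, hQK, hK10, mul_assoc]
  have hS10 : S 1 0 = (γ : ℂ)^2 * (K 0 1 * starRingEnd ℂ (K 0 1)) := by
    simp [hSK, hQK, hK10, mul_comm, mul_left_comm]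
  rw [Complex.mul_conj'] at hS01 hS10
  refine ⟨hS01.trans hS10.symm, by rw [hS01]; push_cast; rfl, ?_⟩
  rw [hS01]
  exact_mod_cast (by positivity : (0 : ℝ) ≤ γ ^ 2 * ‖K 0 1‖ ^ 2)

/-- in the two-station case with the swap permutation, the off-diagonal entries
of the power matrix `S` satisfy `s₁₂ = s₂₁ = γ²|K₁₂|²` where `K = H⁻¹H⁻ᴴ`; in particular they
are equal, real, and nonnegative. -/
theorem two_station_S_offdiag
    (H : Matrix (Fin 2) (Fin 2) ℂ) (hH : IsUnit H.det)
    (γ : ℝ) (hγ : 0 ≤ γ)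
    (P : Matrix (Fin 2) (Fin 2) ℂ) (hP : P = !![0, 1; 1, 0])
    (Q : Matrix (Fin 2) (Fin 2) ℂ)
    (hQ : Q = 1 + ((γ : ℂ)^2) • (P * H⁻¹ * (Hᴴ)⁻¹ * Pᵀ))
    (S : Matrix (Fin 2) (Fin 2) ℂ)
    (hS : ∀ i j, S i j = Q j i * (((H.map (starRingEnd ℂ))⁻¹ * (Hᵀ)⁻¹) i j))
    (K : Matrix (Fin 2) (Fin 2) ℂ) (hK : K = H⁻¹ * (Hᴴ)⁻¹) :
    S 0 1 = S 1 0 ∧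
    S 0 1 = ((γ : ℂ)^2) * ((‖K 0 1‖^2 : ℝ) : ℂ) ∧
    0 ≤ S 0 1 :=
  two_station_S_offdiag_general H γ P hP Q hQ S hS K hK
end

section
/- Let σ > 0, p > 0, q_δ ≥ 0, and s₁₁, s₁₂, s₂₂ be real numbers. Let a₁ > 0 and set a₂ = −σ/√(q_δ + σ²/a₁²). If the power constraint holds with equality, s₁₁ a₁² + 2 s₁₂ a₁ a₂ + s₂₂ a₂² = p, then a₁ satisfies the biquartic equation 0 = s₁₁² q_δ² a₁⁸ + 2 q_δ [s₁₁² σ² + s₁₁ s₂₂ σ² − s₁₁ p q_δ − 2 s₁₂² σ²] a₁⁶ + [σ⁴ (s₁₁ + s₂₂)² + p² q_δ² − 2 p σ² q_δ (2 s₁₁ + s₂₂) − 4 s₁₂² σ⁴] a₁⁴ + [2 p² σ² q_δ − 2 p σ⁴ (s₁₁ + s₂₂)] a₁² + p² σ⁴. -/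
/-! The equal-noise relation only involves `a₂²`: it says `a₂² (q_δ a₁² + σ²) = σ² a₁²`.
The power constraint involves `a₂` itself only through the cross term `2 s₁₂ a₁ a₂`; isolating
that term and squaring leaves an equation in `a₂²`, and multiplying it by `(q_δ a₁² + σ²)²`
eliminates `a₂` altogether. Expanding the result gives the biquartic in `a₁`. -/

open Real

lemma sq_mul_eq_of_eq_neg_div_sqrt {σ q a b : ℝ} (hσ : σ ≠ 0) (hq : 0 ≤ q) (ha : a ≠ 0)
    (hb : b = -σ / √(q + σ ^ 2 / a ^ 2)) : b ^ 2 * (q * a ^ 2 + σ ^ 2) = σ ^ 2 * a ^ 2 := by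
  have ht : 0 < q + σ ^ 2 / a ^ 2 := by positivity
  have hb2 : b ^ 2 = σ ^ 2 / (q + σ ^ 2 / a ^ 2) := by
    rw [hb, div_pow, sq_sqrt ht.le, neg_sq]
  rw [hb2]
  field_simp

lemma sq_eq_of_quadratic_eq_of_sq_mul_eq {R : Type*} [CommRing R] {s11 s12 s22 q σ x y p : R}
    (hform : s11 * x ^ 2 + 2 * s12 * x * y + s22 * y ^ 2 = p)
    (hy : y ^ 2 * (q * x ^ 2 + σ ^ 2) = σ ^ 2 * x ^ 2) :
    (p * (q * x ^ 2 + σ ^ 2) - s11 * x ^ 2 * (q * x ^ 2 + σ ^ 2) - s22 * (σ ^ 2 * x ^ 2)) ^ 2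
      = 4 * s12 ^ 2 * x ^ 2 * (σ ^ 2 * x ^ 2) * (q * x ^ 2 + σ ^ 2) := by
  -- `p - s11 x² - s22 y² = 2 s12 x y`; multiply by `q x² + σ²` and trade `y² (q x² + σ²)` for `σ² x²`
  have hcross : (p - s11 * x ^ 2 - s22 * y ^ 2) ^ 2 = 4 * s12 ^ 2 * x ^ 2 * y ^ 2 := by
    rw [← hform]; ring
  linear_combination (q * x ^ 2 + σ ^ 2) ^ 2 * hcross
    + (2 * s22 * (q * x ^ 2 + σ ^ 2) * (p - s11 * x ^ 2 - s22 * y ^ 2)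
      + s22 ^ 2 * (y ^ 2 * (q * x ^ 2 + σ ^ 2) - σ ^ 2 * x ^ 2)
      + 4 * s12 ^ 2 * x ^ 2 * (q * x ^ 2 + σ ^ 2)) * hy

theorem two_station_biquartic_general
    (σ p qδ s11 s12 s22 a1 a2 : ℝ)
    (hσ : 0 < σ) (hqδ : 0 ≤ qδ) (ha1 : 0 < a1)
    (ha2 : a2 = -σ / Real.sqrt (qδ + σ^2 / a1^2))
    (hpow : s11 * a1^2 + 2 * s12 * a1 * a2 + s22 * a2^2 = p) :
    0 = s11^2 * qδ^2 * a1^8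
        + 2 * qδ * (s11^2 * σ^2 + s11 * s22 * σ^2 - s11 * p * qδ - 2 * s12^2 * σ^2) * a1^6
        + (σ^4 * (s11 + s22)^2 + p^2 * qδ^2 - 2 * p * σ^2 * qδ * (2 * s11 + s22)
            - 4 * s12^2 * σ^4) * a1^4
        + (2 * p^2 * σ^2 * qδ - 2 * p * σ^4 * (s11 + s22)) * a1^2
        + p^2 * σ^4 := by
  have hgain := sq_mul_eq_of_eq_neg_div_sqrt hσ.ne' hqδ ha1.ne' ha2
  linear_combination -sq_eq_of_quadratic_eq_of_sq_mul_eq hpow hgain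

/-- the biquartic equation (65) satisfied by `a₁` in the optimal two-station
equal-SNR zero-forcing solution, where `a₂ = −σ/√(q_δ + σ²/a₁²)` and the relay power
constraint holds with equality. -/
theorem two_station_biquartic
    (σ p qδ s11 s12 s22 a1 a2 : ℝ)
    (hσ : 0 < σ) (hp : 0 < p) (hqδ : 0 ≤ qδ) (ha1 : 0 < a1)
    (ha2 : a2 = -σ / Real.sqrt (qδ + σ^2 / a1^2))
    (hpow : s11 * a1^2 + 2 * s12 * a1 * a2 + s22 * a2^2 = p) :
    0 = s11^2 * qδ^2 * a1^8
        + 2 * qδ * (s11^2 * σ^2 + s11 * s22 * σ^2 - s11 * p * qδ - 2 * s12^2 * σ^2) * a1^6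
        + (σ^4 * (s11 + s22)^2 + p^2 * qδ^2 - 2 * p * σ^2 * qδ * (2 * s11 + s22)
            - 4 * s12^2 * σ^4) * a1^4
        + (2 * p^2 * σ^2 * qδ - 2 * p * σ^4 * (s11 + s22)) * a1^2
        + p^2 * σ^4 :=
  two_station_biquartic_general σ p qδ s11 s12 s22 a1 a2 hσ hqδ ha1 ha2 hpow
end
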